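/- arXiv:1309.6136 — 3 statements merged into one kernel-verified Lean document; each statement's English description precedes it below -/
import Mathlib

section
/- For any constants a, b ∈ (0,1), ρ ∈ [0,1), and w > 0, the double integral ∫₀^∞ ∫₀^∞ exp( -((w/s)² + (w/t)²)/(2(1+ρ)) - s - t ) ds dt is at most (1/((1-a)(1-b))) · exp( -(3/2)(a^{2/3} + b^{2/3}) (1+ρ)^{-1/3} w^{2/3} ). -/
open Real MeasureTheory

/-! Split `exp (-s) = exp (-a s) exp (-(1-a) s)`. By AM-GM for `p + q/2 + q/2`, the exponent
`(x/s)²/(2σ) + a s` is at least its minimum over `s > 0`, namely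
`(3/2) a^{2/3} σ^{-1/3} x^{2/3}`, and `exp (-(1-a) s)` integrates to `1/(1-a)`.
The double integral factors into two such one-dimensional integrals. -/

/-- The minimum over `s > 0` of `(x/s)²/(2σ) + c s`. -/
noncomputable def minExponent (σ c x : ℝ) : ℝ :=
  3 / 2 * c ^ ((2:ℝ) / 3) * σ ^ (-(1:ℝ) / 3) * x ^ ((2:ℝ) / 3)

lemma mul_sq_le_add_pow_three {p q : ℝ} (hp : 0 ≤ p) (hq : 0 ≤ q) :
    27 / 4 * p * q ^ 2 ≤ (p + q) ^ 3 := by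
  nlinarith [mul_nonneg (sq_nonneg (p - q / 2)) (by positivity : 0 ≤ p + 4 * q)]

lemma rpow_div_three_pow_three {y : ℝ} (hy : 0 ≤ y) (k : ℝ) : (y ^ (k / 3)) ^ 3 = y ^ k := by
  rw [← rpow_mul_natCast hy]
  norm_num

lemma minExponent_le {σ c x s : ℝ} (hσ : 0 < σ) (hc : 0 ≤ c) (hx : 0 ≤ x) (hs : 0 < s) :
    minExponent σ c x ≤ (x / s) ^ 2 / (2 * σ) + c * s := by
  unfold minExponent
  refine (pow_le_pow_iff_left₀ (by positivity) (by positivity) three_ne_zero).mp ?_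
  calc (3 / 2 * c ^ ((2:ℝ) / 3) * σ ^ (-(1:ℝ) / 3) * x ^ ((2:ℝ) / 3)) ^ 3
      = 27 / 4 * ((x / s) ^ 2 / (2 * σ)) * (c * s) ^ 2 := by
        simp only [mul_pow, rpow_div_three_pow_three hc, rpow_div_three_pow_three hσ.le,
          rpow_div_three_pow_three hx, rpow_neg_one, rpow_two]
        field_simp
        ring
    _ ≤ ((x / s) ^ 2 / (2 * σ) + c * s) ^ 3 :=
        mul_sq_le_add_pow_three (by positivity) (by positivity)

lemma integral_exp_neg_sq_div_sub_le {σ a x : ℝ} (hσ : 0 < σ) (ha0 : 0 ≤ a) (ha1 : a < 1)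
    (hx : 0 ≤ x) :
    ∫ s in Set.Ioi (0:ℝ), exp (-(x / s) ^ 2 / (2 * σ) - s)
      ≤ 1 / (1 - a) * exp (-minExponent σ a x) := by
  have h1a : 0 < 1 - a := by linarith
  have hbound : ∀ s ∈ Set.Ioi (0:ℝ),
      exp (-(x / s) ^ 2 / (2 * σ) - s) ≤ exp (-minExponent σ a x) * exp (-(1 - a) * s) := by
    intro s hs
    rw [← exp_add, exp_le_exp]
    linarith [minExponent_le hσ ha0 hx hs, neg_div (2 * σ) ((x / s) ^ 2)]
  calc ∫ s in Set.Ioi (0:ℝ), exp (-(x / s) ^ 2 / (2 * σ) - s)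
      ≤ ∫ s in Set.Ioi (0:ℝ), exp (-minExponent σ a x) * exp (-(1 - a) * s) :=
        integral_mono_of_nonneg (ae_of_all _ fun _ => (exp_pos _).le)
          ((exp_neg_integrableOn_Ioi 0 h1a).const_mul _)
          ((ae_restrict_iff' measurableSet_Ioi).mpr (ae_of_all _ hbound))
    _ = 1 / (1 - a) * exp (-minExponent σ a x) := by
        rw [integral_const_mul, integral_exp_mul_Ioi (by linarith), mul_zero, exp_zero]
        field_simp

theorem stmt_1_general (a b ρ w : ℝ) (ha : a ∈ Set.Ioo (0:ℝ) 1) (hb : b ∈ Set.Ioo (0:ℝ) 1)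
    (hρ0 : 0 ≤ ρ) (hw : 0 < w) :
    (∫ s in Set.Ioi (0:ℝ), ∫ t in Set.Ioi (0:ℝ),
        Real.exp (-((w / s) ^ 2 + (w / t) ^ 2) / (2 * (1 + ρ)) - s - t)) ≤
      (1 / ((1 - a) * (1 - b))) *
        Real.exp (-(3 / 2) * (a ^ ((2:ℝ)/3) + b ^ ((2:ℝ)/3)) * (1 + ρ) ^ (-(1:ℝ)/3) *
          w ^ ((2:ℝ)/3)) := by
  set f : ℝ → ℝ := fun s => exp (-(w / s) ^ 2 / (2 * (1 + ρ)) - s)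
  have hσ : 0 < 1 + ρ := by linarith
  have hsplit : ∀ s t,
      exp (-((w / s) ^ 2 + (w / t) ^ 2) / (2 * (1 + ρ)) - s - t) = f s * f t := by
    intro s t
    rw [← exp_add]
    ring_nf
  have hf : 0 ≤ ∫ s in Set.Ioi (0:ℝ), f s :=
    setIntegral_nonneg measurableSet_Ioi fun _ _ => (exp_pos _).le
  calc _ = (∫ s in Set.Ioi (0:ℝ), f s) * ∫ t in Set.Ioi (0:ℝ), f t := by
        simp_rw [hsplit, integral_const_mul, integral_mul_const]
    _ ≤ (1 / (1 - a) * exp (-minExponent (1 + ρ) a w))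
          * (1 / (1 - b) * exp (-minExponent (1 + ρ) b w)) :=
        mul_le_mul (integral_exp_neg_sq_div_sub_le hσ ha.1.le ha.2 hw.le)
          (integral_exp_neg_sq_div_sub_le hσ hb.1.le hb.2 hw.le) hf
          (mul_pos (one_div_pos.mpr (sub_pos.mpr ha.2)) (exp_pos _)).le
    _ = _ := by
        rw [mul_mul_mul_comm, ← exp_add, one_div_mul_one_div, minExponent, minExponent]
        ring_nf

theorem stmt_1 (a b ρ w : ℝ) (ha : a ∈ Set.Ioo (0:ℝ) 1) (hb : b ∈ Set.Ioo (0:ℝ) 1)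
    (hρ0 : 0 ≤ ρ) (hρ1 : ρ < 1) (hw : 0 < w) :
    (∫ s in Set.Ioi (0:ℝ), ∫ t in Set.Ioi (0:ℝ),
        Real.exp (-((w / s) ^ 2 + (w / t) ^ 2) / (2 * (1 + ρ)) - s - t)) ≤
      (1 / ((1 - a) * (1 - b))) *
        Real.exp (-(3 / 2) * (a ^ ((2:ℝ)/3) + b ^ ((2:ℝ)/3)) * (1 + ρ) ^ (-(1:ℝ)/3) *
          w ^ ((2:ℝ)/3)) :=
  stmt_1_general a b ρ w ha hb hρ0 hw
end

section
/- Let S be a random variable with values in [0,1] such that P(S > 1 - 1/u) ≤ c·u^{-τ} for all large u, for some c > 0 and τ ≥ 0. Let X be a standard normal random variable independent of S. Then there exists a constant C > 0 such that P(S·X > w) ≤ C · w^{-2τ-1} · exp(-w²/2) for all w sufficiently large. -/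
/-!
Split `{S X > w}` according to `i = ⌊(1 - S) w²⌋`: on the `i`-th piece `S > 1 - (i + 1) / w²`
and `X > w / (1 - i / w²)`. By independence the probability of the piece factorizes. Since
probabilities are at most `1`, the tail hypothesis extends to all `u > 0` (with a larger
constant), so the first factor is `O(((i + 1) / w²) ^ τ)`; Mills' ratio bounds the second by
`e^{-i} e^{-w²/2} / w`. Summing, `∑ (i + 1) ^ τ e^{-i} < ∞` gives the claim.
-/

open Real MeasureTheory ProbabilityTheory Set Filter Topology

lemma integrable_mul_exp_neg_sq_div_two : Integrable fun x : ℝ => x * exp (-x ^ 2 / 2) := by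
  simpa [neg_div, div_eq_inv_mul] using
    integrable_mul_exp_neg_mul_sq (b := (1 / 2 : ℝ)) (by norm_num)

lemma integral_Ioi_mul_exp_neg_sq_div_two (b : ℝ) :
    ∫ x in Ioi b, x * exp (-x ^ 2 / 2) = exp (-b ^ 2 / 2) := by
  have hderiv : ∀ x ∈ Ici b,
      HasDerivAt (fun x => -exp (-x ^ 2 / 2)) (x * exp (-x ^ 2 / 2)) x := fun x _ => by
    refine (((hasDerivAt_pow 2 x).fun_neg.div_const 2).exp).fun_neg.congr_deriv ?_
    push_cast
    ring
  have hlim : Tendsto (fun x => -exp (-x ^ 2 / 2)) atTop (𝓝 0) := by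
    have : Tendsto (fun x : ℝ => -x ^ 2 / 2) atTop atBot := by
      simpa only [neg_div, Function.comp_def] using
        tendsto_neg_atTop_atBot.comp
          ((tendsto_pow_atTop two_ne_zero).atTop_div_const (two_pos (α := ℝ)))
    simpa using (tendsto_exp_atBot.comp this).neg
  rw [integral_Ioi_of_hasDerivAt_of_tendsto' hderiv
    integrable_mul_exp_neg_sq_div_two.integrableOn hlim]
  ring

lemma gaussianReal_real_Ioi_le {b : ℝ} (hb : 0 < b) :
    (gaussianReal 0 1).real (Ioi b) ≤ exp (-b ^ 2 / 2) / b := by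
  rw [measureReal_def, gaussianReal_apply_eq_integral 0 one_ne_zero, ENNReal.toReal_ofReal
    (setIntegral_nonneg measurableSet_Ioi fun x _ => gaussianPDFReal_nonneg _ _ _)]
  calc ∫ x in Ioi b, gaussianPDFReal 0 1 x
      ≤ ∫ x in Ioi b, b⁻¹ * (x * exp (-x ^ 2 / 2)) := by
        refine setIntegral_mono_on (integrable_gaussianPDFReal 0 1).integrableOn
          (integrable_mul_exp_neg_sq_div_two.integrableOn.const_mul _) measurableSet_Ioi
          fun x hx => ?_
        have hnorm : (√(2 * π))⁻¹ ≤ 1 :=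
          inv_le_one_of_one_le₀ (one_le_sqrt.mpr (by nlinarith [pi_gt_three]))
        have hx : 1 ≤ b⁻¹ * x := by rw [inv_mul_eq_div, le_div_iff₀ hb]; simpa using hx.le
        simp only [gaussianPDFReal, NNReal.coe_one, mul_one, sub_zero]
        rw [← mul_assoc]
        gcongr
        linarith
    _ = exp (-b ^ 2 / 2) / b := by
        rw [integral_const_mul, integral_Ioi_mul_exp_neg_sq_div_two, inv_mul_eq_div]

lemma measureReal_preimage_Ioi_le_of_map_eq_gaussianReal {Ω : Type*} [MeasurableSpace Ω]
    {μ : Measure Ω} {X : Ω → ℝ} (hX : μ.map X = gaussianReal 0 1) {b : ℝ} (hb : 0 < b) :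
    μ.real (X ⁻¹' Ioi b) ≤ exp (-b ^ 2 / 2) / b := by
  have hXm : AEMeasurable X μ := AEMeasurable.of_map_ne_zero (by
    rw [hX]; exact IsProbabilityMeasure.ne_zero _)
  rw [measureReal_def, ← Measure.map_apply_of_aemeasurable hXm measurableSet_Ioi, hX]
  exact gaussianReal_real_Ioi_le hb

lemma exp_neg_sq_div_two_div_le {w x : ℝ} (hw : 0 < w) (hx₀ : 0 ≤ x) (hx₁ : x < 1) :
    exp (-(w / (1 - x)) ^ 2 / 2) / (w / (1 - x))
      ≤ exp (-(x * w ^ 2)) * (exp (-w ^ 2 / 2) / w) := by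
  have hq : 0 < 1 - x := by linarith
  have hsq : w ^ 2 * (1 + 2 * x) ≤ (w / (1 - x)) ^ 2 := by
    rw [div_pow, le_div_iff₀ (by positivity)]
    have : (1 + 2 * x) * (1 - x) ^ 2 ≤ 1 := by
      nlinarith [mul_nonneg (sq_nonneg x) (by linarith : (0:ℝ) ≤ 3 - 2 * x)]
    nlinarith [sq_nonneg w]
  rw [mul_div_assoc', ← exp_add]
  gcongr
  · nlinarith
  · exact le_div_self hw.le hq (by linarith)

lemma exists_forall_le_mul_rpow_neg_of_le_one {p : ℝ → ℝ} {c τ : ℝ} (hτ : 0 ≤ τ)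
    (hp : ∀ u, p u ≤ 1) (h : ∃ u₁, ∀ u ≥ u₁, p u ≤ c * u ^ (-τ)) :
    ∃ A > 0, ∀ u > 0, p u ≤ A * u ^ (-τ) := by
  obtain ⟨u₁, hu₁⟩ := h
  set U := max u₁ 1
  have hU : 0 < U := lt_max_of_lt_right one_pos
  refine ⟨max c (U ^ τ), lt_max_of_lt_right (by positivity), fun u hu => ?_⟩
  rcases le_or_gt u₁ u with h | h
  · exact (hu₁ u h).trans (by gcongr; exact le_max_left _ _)
  · calc p u ≤ U ^ τ * U ^ (-τ) := by rw [← rpow_add hU, add_neg_cancel, rpow_zero]; exact hp u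
      _ ≤ max c (U ^ τ) * u ^ (-τ) := by
        refine mul_le_mul (le_max_right _ _) ?_ (by positivity) (by positivity)
        exact rpow_le_rpow_of_nonpos hu (h.le.trans (le_max_left _ _)) (by linarith)

lemma summable_add_one_rpow_mul_exp_neg (τ : ℝ) :
    Summable fun i : ℕ => ((i : ℝ) + 1) ^ τ * exp (-i) := by
  have hshift : Summable fun i : ℕ => ((i + 1 : ℕ) : ℝ) ^ ⌈τ⌉₊ * exp (-1 * (i + 1 : ℕ)) :=
    (summable_nat_add_iff 1).mpr (summable_pow_mul_exp_neg_nat_mul _ one_pos)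
  refine (hshift.mul_left (exp 1)).of_nonneg_of_le (fun i => by positivity) fun i => ?_
  calc ((i : ℝ) + 1) ^ τ * exp (-i) ≤ ((i : ℝ) + 1) ^ (⌈τ⌉₊ : ℝ) * exp (-i) := by
        gcongr
        · exact le_add_of_nonneg_left i.cast_nonneg
        · exact Nat.le_ceil τ
    _ = exp 1 * (((i + 1 : ℕ) : ℝ) ^ ⌈τ⌉₊ * exp (-1 * (i + 1 : ℕ))) := by
        rw [rpow_natCast, mul_left_comm, ← exp_add]
        push_cast
        ring_nf

lemma exists_nat_layer_of_lt_mul {s x w : ℝ} (hs : s ∈ Icc (0 : ℝ) 1) (hw : 0 < w)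
    (h : w < s * x) :
    ∃ i : ℕ, (i : ℝ) < w ^ 2 ∧ 1 - (i + 1) / w ^ 2 < s ∧ w / (1 - i / w ^ 2) < x := by
  obtain ⟨hs₀, hs₁⟩ := hs
  have hs : 0 < s := lt_of_le_of_ne hs₀ fun h0 => by rw [← h0, zero_mul] at h; linarith
  have hw2 : 0 < w ^ 2 := by positivity
  set i := ⌊(1 - s) * w ^ 2⌋₊
  have hi_le : (i : ℝ) ≤ (1 - s) * w ^ 2 := Nat.floor_le (by nlinarith)
  have hi_lt : (1 - s) * w ^ 2 < i + 1 := Nat.lt_floor_add_one _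
  have hsq : s ≤ 1 - i / w ^ 2 := by rw [le_sub_comm, div_le_iff₀ hw2]; linarith
  refine ⟨i, by nlinarith, by rw [sub_lt_comm, lt_div_iff₀ hw2]; linarith, ?_⟩
  calc w / (1 - i / w ^ 2) ≤ w / s := div_le_div_of_nonneg_left hw.le hs hsq
    _ < x := by rwa [div_lt_iff₀' hs]

def mulLayer {Ω : Type*} (S X : Ω → ℝ) (w : ℝ) (i : ℕ) : Set Ω :=
  S ⁻¹' Ioi (1 - (i + 1) / w ^ 2) ∩ X ⁻¹' Ioi (w / (1 - i / w ^ 2))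

lemma setOf_lt_mul_subset_biUnion_mulLayer {Ω : Type*} {S X : Ω → ℝ}
    (hS : ∀ ω, S ω ∈ Icc (0 : ℝ) 1) {w : ℝ} (hw : 0 < w) :
    {ω | w < S ω * X ω} ⊆ ⋃ i ∈ Finset.range ⌈w ^ 2⌉₊, mulLayer S X w i := by
  intro ω hω
  obtain ⟨i, hi, hS', hX'⟩ := exists_nat_layer_of_lt_mul (hS ω) hw hω
  exact mem_biUnion (Finset.mem_range.mpr (Nat.lt_ceil.mpr hi)) ⟨hS', hX'⟩

lemma measureReal_mulLayer_le {Ω : Type*} [MeasurableSpace Ω] {μ : Measure Ω} {S X : Ω → ℝ}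
    (hX : μ.map X = gaussianReal 0 1) (hindep : IndepFun S X μ) {A τ : ℝ}
    (hS : ∀ u > 0, μ.real {ω | S ω > 1 - 1 / u} ≤ A * u ^ (-τ)) {w : ℝ} (hw : 0 < w) {i : ℕ}
    (hi : (i : ℝ) < w ^ 2) :
    μ.real (mulLayer S X w i)
      ≤ A * (((i : ℝ) + 1) ^ τ * exp (-i)) * (w ^ (-2 * τ - 1) * exp (-w ^ 2 / 2)) := by
  have hw2 : 0 < w ^ 2 := by positivity
  have hx₁ : (i : ℝ) / w ^ 2 < 1 := (div_lt_one hw2).mpr hi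
  have hSi : μ.real (S ⁻¹' Ioi (1 - (i + 1) / w ^ 2))
      ≤ A * (((i : ℝ) + 1) ^ τ * w ^ (-2 * τ)) := by
    have hset : S ⁻¹' Ioi (1 - (i + 1) / w ^ 2) = {ω | S ω > 1 - 1 / (w ^ 2 / (i + 1))} := by
      ext ω; simp
    rw [hset]
    refine (hS _ (by positivity)).trans_eq ?_
    rw [div_rpow hw2.le (by positivity), rpow_neg hw2.le,
      rpow_neg (x := (i : ℝ) + 1) (by positivity), neg_mul, rpow_neg hw.le, ← rpow_natCast,
      ← rpow_mul hw.le]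
    push_cast
    field_simp
  have hXi : μ.real (X ⁻¹' Ioi (w / (1 - i / w ^ 2))) ≤ exp (-i) * (exp (-w ^ 2 / 2) / w) := by
    refine (measureReal_preimage_Ioi_le_of_map_eq_gaussianReal hX
      (div_pos hw (by linarith))).trans ?_
    refine (exp_neg_sq_div_two_div_le hw (by positivity) hx₁).trans_eq ?_
    rw [div_mul_cancel₀ _ hw2.ne']
  rw [mulLayer, measureReal_def,
    hindep.measure_inter_preimage_eq_mul _ _ measurableSet_Ioi measurableSet_Ioi,
    ENNReal.toReal_mul]
  calc _ ≤ A * (((i : ℝ) + 1) ^ τ * w ^ (-2 * τ)) * (exp (-i) * (exp (-w ^ 2 / 2) / w)) :=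
        mul_le_mul hSi hXi measureReal_nonneg (measureReal_nonneg.trans hSi)
    _ = _ := by
        rw [sub_eq_add_neg, rpow_add hw, rpow_neg_one]
        ring

theorem stmt_4_general {Ω : Type*} [MeasureSpace Ω] [IsProbabilityMeasure (ℙ : Measure Ω)]
    (S X : Ω → ℝ) (hSrange : ∀ ω, S ω ∈ Set.Icc (0:ℝ) 1)
    (hX : Measure.map X ℙ = gaussianReal 0 1)
    (hindep : IndepFun S X)
    (c τ : ℝ) (hτ : 0 ≤ τ)
    (htail : ∃ u₁ : ℝ, ∀ u ≥ u₁, (ℙ {ω | S ω > 1 - 1 / u}).toReal ≤ c * u ^ (-τ)) :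
    ∃ C > 0, ∃ w₀ : ℝ, ∀ w ≥ w₀,
      (ℙ {ω | S ω * X ω > w}).toReal ≤ C * w ^ (-2 * τ - 1) * Real.exp (-w ^ 2 / 2) := by
  obtain ⟨A, hA, hS⟩ :=
    exists_forall_le_mul_rpow_neg_of_le_one hτ (fun _ => measureReal_le_one) htail
  have hsum := summable_add_one_rpow_mul_exp_neg τ
  set T := ∑' i : ℕ, ((i : ℝ) + 1) ^ τ * exp (-i)
  have hT : 0 < T := hsum.tsum_pos (fun i => by positivity) 0 (by simp)
  refine ⟨A * T, by positivity, 1, fun w hw₁ => ?_⟩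
  have hw : 0 < w := by linarith
  calc (ℙ : Measure Ω).real {ω | w < S ω * X ω}
      ≤ ∑ i ∈ Finset.range ⌈w ^ 2⌉₊, (ℙ : Measure Ω).real (mulLayer S X w i) :=
        (measureReal_mono (setOf_lt_mul_subset_biUnion_mulLayer hSrange hw)
          (measure_ne_top _ _)).trans (measureReal_biUnion_finset_le _ _)
    _ ≤ ∑ i ∈ Finset.range ⌈w ^ 2⌉₊,
          A * (((i : ℝ) + 1) ^ τ * exp (-i)) * (w ^ (-2 * τ - 1) * exp (-w ^ 2 / 2)) :=
        Finset.sum_le_sum fun i hi => measureReal_mulLayer_le hX hindep hS hw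
          (Nat.lt_ceil.mp (Finset.mem_range.mp hi))
    _ ≤ A * T * (w ^ (-2 * τ - 1) * exp (-w ^ 2 / 2)) := by
        rw [← Finset.sum_mul, ← Finset.mul_sum]
        gcongr
        exact hsum.sum_le_tsum _ fun i _ => by positivity
    _ = A * T * w ^ (-2 * τ - 1) * exp (-w ^ 2 / 2) := by ring

theorem stmt_4 {Ω : Type*} [MeasureSpace Ω] [IsProbabilityMeasure (ℙ : Measure Ω)]
    (S X : Ω → ℝ) (hSrange : ∀ ω, S ω ∈ Set.Icc (0:ℝ) 1)
    (hX : Measure.map X ℙ = gaussianReal 0 1)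
    (hindep : IndepFun S X)
    (c τ : ℝ) (hc : 0 < c) (hτ : 0 ≤ τ)
    (htail : ∃ u₁ : ℝ, ∀ u ≥ u₁, (ℙ {ω | S ω > 1 - 1 / u}).toReal ≤ c * u ^ (-τ)) :
    ∃ C > 0, ∃ w₀ : ℝ, ∀ w ≥ w₀,
      (ℙ {ω | S ω * X ω > w}).toReal ≤ C * w ^ (-2 * τ - 1) * Real.exp (-w ^ 2 / 2) :=
  stmt_4_general S X hSrange hX hindep c τ hτ htail
end

section
/- Let σ ∈ [0,1), p > 0, and β ∈ (0, 2(1+σ)^{-p/(2+p)} - 1). Let λ(k,n) be nonnegative reals with λ(k,n) ≤ σ for all 1 ≤ k < n, and suppose max_{[n^β] ≤ k < n} λ(k,n)·ln n → 0 as n → ∞. Let w_n satisfy w_n ~ (ln n / T)^{(2+p)/(2p)} and exp(-T w_n^{2p/(2+p)}) ~ C·w_n^{-2α/(2+p)}/n for constants T, C > 0, α ∈ ℝ. Then n·w_n^{(4α+2p)/(2+p)}·Σ_{k=1}^{n-1} λ(k,n)·exp(-2(1+λ(k,n))^{-p/(2+p)}·T·w_n^{2p/(2+p)}) → 0 as n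 → ∞. -/
/-!
Write `u n = T * w n ^ (2p/(2+p))`, so that `u n ~ log n` and the prefactor satisfies
`n * w n ^ ((4α+2p)/(2+p)) * exp (-2 u n) ~ (C²/T) * log n / n`. Split the sum at `m = ⌊n ^ β⌋`.
For `k < m` every term is at most `σ * exp (-2γ u n)` with `γ = (1 + σ) ^ (-p/(2+p))`, so this part
is `n ^ (β - 1 + 2(1 - γ) + o(1)) * log n → 0`, because `1 + β < 2γ`.
For `k ≥ m` we have `λ ≤ δ n / log n` with `δ n → 0`, and Bernoulli's inequality
`(1 + λ) ^ (-p/(2+p)) ≥ 1 - λ` bounds each term by `λ * exp (2λ u n) * exp (-2 u n)`;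
the at most `n` such terms contribute `O(δ n) → 0`.
-/

open Real Filter Topology Finset

lemma one_sub_le_one_add_rpow {x s : ℝ} (hx : 0 ≤ x) (hs : -1 ≤ s) :
    1 - x ≤ (1 + x) ^ s := by
  calc 1 - x ≤ (1 + x)⁻¹ := by
        rw [inv_eq_one_div, le_div_iff₀ (by linarith)]
        nlinarith
    _ = (1 + x) ^ (-1 : ℝ) := (rpow_neg_one _).symm
    _ ≤ (1 + x) ^ s := rpow_le_rpow_of_exponent_le (by linarith) hs

lemma mul_exp_le_of_le {x σ s u : ℝ} (hx : 0 ≤ x) (hxσ : x ≤ σ) (hs : s ≤ 0) (hu : 0 ≤ u) :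
    x * exp (-2 * (1 + x) ^ s * u) ≤ σ * exp (-2 * (1 + σ) ^ s * u) := by
  have hmono : (1 + σ) ^ s ≤ (1 + x) ^ s :=
    rpow_le_rpow_of_nonpos (by linarith) (by linarith) hs
  exact mul_le_mul hxσ (exp_le_exp.2 (by nlinarith)) (exp_pos _).le (hx.trans hxσ)

lemma mul_exp_le_of_mul_le {x s u L δ : ℝ} (hx : 0 ≤ x) (hs : -1 ≤ s)
    (hu : 0 ≤ u) (hL : 0 < L) (hxδ : x * L ≤ δ) :
    x * exp (-2 * (1 + x) ^ s * u) ≤ δ / L * exp (2 * δ * (u / L)) * exp (-2 * u) := by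
  have hxL : x ≤ δ / L := (le_div_iff₀ hL).2 hxδ
  have hxu : x * u ≤ δ * (u / L) := by
    rw [mul_div_assoc', le_div_iff₀ hL]
    nlinarith
  have hexp : -2 * (1 + x) ^ s * u ≤ 2 * δ * (u / L) + -2 * u := by
    nlinarith [one_sub_le_one_add_rpow hx hs]
  calc x * exp (-2 * (1 + x) ^ s * u) ≤ δ / L * exp (2 * δ * (u / L) + -2 * u) :=
        mul_le_mul hxL (exp_le_exp.2 hexp) (exp_pos _).le (hx.trans hxL)
    _ = δ / L * exp (2 * δ * (u / L)) * exp (-2 * u) := by rw [exp_add]; ring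

lemma exists_tendsto_zero_forall_le {α ι : Type*} {l : Filter α} (s : α → Finset ι)
    (f : α → ι → ℝ) (h : ∀ ε > 0, ∀ᶠ x in l, ∀ k ∈ s x, f x k ≤ ε) :
    ∃ δ : α → ℝ, Tendsto δ l (𝓝 0) ∧ (∀ x, 0 ≤ δ x) ∧ ∀ x, ∀ k ∈ s x, f x k ≤ δ x := by
  refine ⟨fun x => ⨆ k : s x, max (f x k) 0, ?_, fun x => iSup_nonneg fun _ => le_max_right _ _,
    fun x k hk => Finite.le_ciSup_of_le ⟨k, hk⟩ (le_max_left _ _)⟩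
  refine tendsto_order.2 ⟨fun a ha => Eventually.of_forall fun x =>
    ha.trans_le (iSup_nonneg fun _ => le_max_right _ _), fun a ha => ?_⟩
  filter_upwards [h (a / 2) (half_pos ha)] with x hx
  exact (Real.iSup_le (fun k : s x => max_le (hx k.1 k.2) (half_pos ha).le)
    (half_pos ha).le).trans_lt (half_lt_self ha)

lemma tendsto_mul_exp_mul_nhds_zero {α : Type*} {l : Filter α} {L a : α → ℝ} {a₀ : ℝ}
    (hL : Tendsto L l atTop) (ha : Tendsto a l (𝓝 a₀)) (ha₀ : a₀ < 0) :
    Tendsto (fun x => L x * exp (a x * L x)) l (𝓝 0) := by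
  have hlim : Tendsto (fun x => L x ^ (1 : ℝ) * exp (-(-a₀ / 2) * L x)) l (𝓝 0) :=
    (tendsto_rpow_mul_exp_neg_mul_atTop_nhds_zero 1 (-a₀ / 2) (by linarith)).comp hL
  refine squeeze_zero' ?_ ?_ hlim
  · filter_upwards [hL.eventually_ge_atTop 0] with x hx using by positivity
  · filter_upwards [hL.eventually_ge_atTop 0,
      ha.eventually (ge_mem_nhds (by linarith : a₀ < a₀ / 2))] with x hx hax
    have : a x * L x ≤ -(-a₀ / 2) * L x := by nlinarith
    rw [rpow_one]
    gcongr

lemma sum_mul_exp_le {u L σ s δ : ℝ} {m n : ℕ} (lam : ℕ → ℝ) (hu : 0 ≤ u) (hL : 0 < L)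
    (hσ : 0 ≤ σ) (hs₁ : -1 ≤ s) (hs₀ : s ≤ 0) (hδ : 0 ≤ δ)
    (hlam : ∀ k ∈ Ico 1 n, 0 ≤ lam k ∧ lam k ≤ σ) (hlong : ∀ k ∈ Ico m n, lam k * L ≤ δ) :
    ∑ k ∈ Ico 1 n, lam k * exp (-2 * (1 + lam k) ^ s * u) ≤
      m * (σ * exp (-2 * (1 + σ) ^ s * u)) +
        n * (δ / L * exp (2 * δ * (u / L)) * exp (-2 * u)) := by
  rw [← sum_filter_add_sum_filter_not (Ico 1 n) (· < m)]
  gcongr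
  · have hcard : #{k ∈ Ico 1 n | k < m} ≤ m :=
      (card_le_card fun k hk => mem_range.2 (mem_filter.1 hk).2).trans (card_range m).le
    calc _ ≤ #{k ∈ Ico 1 n | k < m} • (σ * exp (-2 * (1 + σ) ^ s * u)) :=
          sum_le_card_nsmul _ _ _ fun k hk =>
            have hk := (mem_filter.1 hk).1
            mul_exp_le_of_le (hlam k hk).1 (hlam k hk).2 hs₀ hu
      _ ≤ _ := by rw [nsmul_eq_mul]; gcongr
  · have hcard : #{k ∈ Ico 1 n | ¬k < m} ≤ n :=
      (card_filter_le _ _).trans (by simp)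
    calc _ ≤ #{k ∈ Ico 1 n | ¬k < m} • (δ / L * exp (2 * δ * (u / L)) * exp (-2 * u)) :=
          sum_le_card_nsmul _ _ _ fun k hk => by
            obtain ⟨hk, hmk⟩ := mem_filter.1 hk
            exact mul_exp_le_of_mul_le (hlam k hk).1 hs₁ hu hL
              (hlong k (mem_Ico.2 ⟨not_lt.1 hmk, (mem_Ico.1 hk).2⟩))
      _ ≤ _ := by rw [nsmul_eq_mul]; gcongr

lemma rpow_mul_exp_eq {x β γ u : ℝ} (hx : 1 < x) :
    x ^ β * exp (-2 * γ * u) =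
      exp (-2 * u) * x / log x * (log x * exp ((β - 1 + 2 * (1 - γ) * (u / log x)) * log x)) := by
  have hx₀ : 0 < x := by linarith
  have hlog : log x ≠ 0 := (log_pos hx).ne'
  rw [← mul_assoc, div_mul_cancel₀ _ hlog, mul_assoc (exp (-2 * u)), ← exp_log hx₀,
    ← exp_add, ← exp_add, log_exp, rpow_def_of_pos (exp_pos _), log_exp, ← exp_add]
  congr 1
  field_simp
  ring

lemma mul_sum_mul_exp_le {P u σ s β δ : ℝ} {n : ℕ} (lam : ℕ → ℝ) (hn : 1 < (n : ℝ))
    (hP : 0 ≤ P) (hu : 0 ≤ u) (hσ : 0 ≤ σ) (hs₁ : -1 ≤ s) (hs₀ : s ≤ 0) (hδ : 0 ≤ δ)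
    (hlam : ∀ k ∈ Ico 1 n, 0 ≤ lam k ∧ lam k ≤ σ)
    (hlong : ∀ k ∈ Ico ⌊(n : ℝ) ^ β⌋₊ n, lam k * log n ≤ δ) :
    P * ∑ k ∈ Ico 1 n, lam k * exp (-2 * (1 + lam k) ^ s * u) ≤
      σ * (P * exp (-2 * u) * n / log n *
          (log n * exp ((β - 1 + 2 * (1 - (1 + σ) ^ s) * (u / log n)) * log n))) +
        P * exp (-2 * u) * n / log n * (δ * exp (2 * δ * (u / log n))) := by
  have hm : (⌊(n : ℝ) ^ β⌋₊ : ℝ) ≤ (n : ℝ) ^ β := Nat.floor_le (by positivity)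
  calc P * ∑ k ∈ Ico 1 n, lam k * exp (-2 * (1 + lam k) ^ s * u)
      ≤ P * (⌊(n : ℝ) ^ β⌋₊ * (σ * exp (-2 * (1 + σ) ^ s * u)) +
          n * (δ / log n * exp (2 * δ * (u / log n)) * exp (-2 * u))) :=
        mul_le_mul_of_nonneg_left (sum_mul_exp_le lam hu (log_pos hn) hσ hs₁ hs₀ hδ hlam hlong) hP
    _ ≤ P * ((n : ℝ) ^ β * (σ * exp (-2 * (1 + σ) ^ s * u)) +
          n * (δ / log n * exp (2 * δ * (u / log n)) * exp (-2 * u))) := by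
        gcongr
    _ = _ := by
        rw [← mul_assoc ((n : ℝ) ^ β), mul_comm _ σ, mul_assoc σ, rpow_mul_exp_eq hn]
        ring

theorem tendsto_mul_sum_mul_exp_nhds_zero {σ β s K : ℝ} (hσ : 0 ≤ σ) (hs₁ : -1 ≤ s)
    (hs₀ : s ≤ 0) (hβ : 1 + β < 2 * (1 + σ) ^ s) (lam : ℕ → ℕ → ℝ)
    (hlam : ∀ n k : ℕ, 1 ≤ k → k < n → 0 ≤ lam k n ∧ lam k n ≤ σ)
    (hmax : ∀ ε > (0:ℝ), ∃ N : ℕ, ∀ n ≥ N, ∀ k : ℕ,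
      ⌊(n : ℝ) ^ β⌋₊ ≤ k → k < n → lam k n * log n ≤ ε)
    {u P : ℕ → ℝ} (hu0 : ∀ n, 0 ≤ u n) (hP0 : ∀ n, 0 ≤ P n)
    (hu : Tendsto (fun n : ℕ => u n / log n) atTop (𝓝 1))
    (hP : Tendsto (fun n : ℕ => P n * exp (-2 * u n) * n / log n) atTop (𝓝 K)) :
    Tendsto (fun n => P n * ∑ k ∈ Ico 1 n, lam k n * exp (-2 * (1 + lam k n) ^ s * u n))
      atTop (𝓝 0) := by
  obtain ⟨δ, hδ, hδ0, hlong⟩ := exists_tendsto_zero_forall_le (l := atTop)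
    (fun n : ℕ => Ico ⌊(n : ℝ) ^ β⌋₊ n) (fun n k => lam k n * log n) fun ε hε => by
      obtain ⟨N, hN⟩ := hmax ε hε
      exact eventually_atTop.2 ⟨N, fun n hn k hk => hN n hn k (mem_Ico.1 hk).1 (mem_Ico.1 hk).2⟩
  set γ := (1 + σ) ^ s
  have hlog : Tendsto (fun n : ℕ => log n) atTop atTop :=
    tendsto_log_atTop.comp tendsto_natCast_atTop_atTop
  have hshort : Tendsto (fun n : ℕ => log n * exp ((β - 1 + 2 * (1 - γ) * (u n / log n)) * log n))
      atTop (𝓝 0) :=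
    tendsto_mul_exp_mul_nhds_zero hlog ((hu.const_mul (2 * (1 - γ))).const_add (β - 1))
      (by linarith)
  have hlong_lim : Tendsto (fun n : ℕ => δ n * exp (2 * δ n * (u n / log n))) atTop (𝓝 0) := by
    simpa using hδ.mul (((hδ.const_mul 2).mul hu).rexp)
  have hbound := (hP.mul hshort).const_mul σ |>.add (hP.mul hlong_lim)
  simp only [mul_zero, add_zero] at hbound
  refine squeeze_zero' (Eventually.of_forall fun n => mul_nonneg (hP0 n) (sum_nonneg fun k hk =>
    mul_nonneg (hlam n k (mem_Ico.1 hk).1 (mem_Ico.1 hk).2).1 (exp_pos _).le)) ?_ hbound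
  filter_upwards [(tendsto_natCast_atTop_atTop (R := ℝ)).eventually_gt_atTop 1] with n hn
  exact mul_sum_mul_exp_le (lam · n) hn (hP0 n) (hu0 n) hσ hs₁ hs₀ (hδ0 n)
    (fun k hk => hlam n k (mem_Ico.1 hk).1 (mem_Ico.1 hk).2) (hlong n)

lemma tendsto_mul_rpow_div_of_tendsto_div_rpow {α : Type*} {l : Filter α} {w L : α → ℝ}
    {T a b : ℝ} (hT : 0 < T) (hab : a * b = 1) (hw : ∀ x, 0 < w x) (hL : ∀ᶠ x in l, 0 < L x)
    (h : Tendsto (fun x => w x / (L x / T) ^ a) l (𝓝 1)) :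
    Tendsto (fun x => T * w x ^ b / L x) l (𝓝 1) := by
  have hb := h.rpow_const (p := b) (Or.inl one_ne_zero)
  rw [one_rpow] at hb
  refine hb.congr' ?_
  filter_upwards [hL] with x hx
  have hLT : 0 < L x / T := div_pos hx hT
  rw [div_rpow (hw x).le (rpow_pos_of_pos hLT a).le, ← rpow_mul hLT.le, hab, rpow_one]
  field_simp

lemma tendsto_mul_rpow_mul_exp_div_log {C T a ρ : ℝ} {w : ℕ → ℝ} (hC : C ≠ 0) (hT : T ≠ 0)
    (hw : ∀ n, 0 < w n) (hu : Tendsto (fun n : ℕ => T * w n ^ ρ / log n) atTop (𝓝 1))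
    (h : Tendsto (fun n : ℕ => exp (-T * w n ^ ρ) / (C * w n ^ (-a) / n)) atTop (𝓝 1)) :
    Tendsto (fun n : ℕ => n * w n ^ (2 * a + ρ) * exp (-2 * (T * w n ^ ρ)) * n / log n)
      atTop (𝓝 (C ^ 2 / T)) := by
  have hlim := ((h.pow 2).mul hu).const_mul (C ^ 2 / T)
  rw [one_pow, one_mul, mul_one] at hlim
  refine hlim.congr' ?_
  filter_upwards [eventually_gt_atTop 0] with n hn
  have hn : (n : ℝ) ≠ 0 := by positivity
  have hwa : w n ^ a ≠ 0 := (rpow_pos_of_pos (hw n) a).ne'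
  have hpow : w n ^ (2 * a + ρ) = w n ^ a * w n ^ a * w n ^ ρ := by
    rw [rpow_add (hw n), two_mul, rpow_add (hw n)]
  have hexp : exp (-2 * (T * w n ^ ρ)) = exp (-T * w n ^ ρ) ^ 2 := by
    rw [sq, ← exp_add]
    ring_nf
  rw [rpow_neg (hw n).le, hpow, hexp]
  field_simp

theorem stmt_15 (σ p β T C α : ℝ)
    (hσ : σ ∈ Set.Ico (0:ℝ) 1) (hp : 0 < p) (hT : 0 < T) (hC : 0 < C)
    (hβ : β ∈ Set.Ioo 0 (2 * (1 + σ) ^ (-p / (2 + p)) - 1))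
    (lam : ℕ → ℕ → ℝ)
    (hlam : ∀ n k : ℕ, 1 ≤ k → k < n → 0 ≤ lam k n ∧ lam k n ≤ σ)
    (hmax : ∀ ε > (0:ℝ), ∃ N : ℕ, ∀ n ≥ N, ∀ k : ℕ,
      ⌊(n : ℝ) ^ β⌋₊ ≤ k → k < n → lam k n * Real.log n ≤ ε)
    (w : ℕ → ℝ) (hwpos : ∀ n, 0 < w n)
    (hw1 : Tendsto (fun n : ℕ => w n / (Real.log n / T) ^ ((2 + p) / (2 * p)))
      atTop (nhds 1))
    (hw2 : Tendsto (fun n : ℕ =>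
        Real.exp (-T * w n ^ (2 * p / (2 + p))) / (C * w n ^ (-2 * α / (2 + p)) / n))
      atTop (nhds 1)) :
    Tendsto (fun n : ℕ => (n : ℝ) * w n ^ ((4 * α + 2 * p) / (2 + p)) *
        ∑ k ∈ Finset.Ico 1 n, lam k n *
          Real.exp (-2 * (1 + lam k n) ^ (-p / (2 + p)) * T * w n ^ (2 * p / (2 + p))))
      atTop (nhds 0) := by
  have hs₁ : -1 ≤ -p / (2 + p) := by
    rw [neg_div, neg_le_neg_iff, div_le_one (by linarith)]
    linarith
  have hs₀ : -p / (2 + p) ≤ 0 := div_nonpos_of_nonpos_of_nonneg (by linarith) (by linarith)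
  have hu := tendsto_mul_rpow_div_of_tendsto_div_rpow hT
    (show (2 + p) / (2 * p) * (2 * p / (2 + p)) = 1 by field_simp) hwpos
    ((tendsto_log_atTop.comp tendsto_natCast_atTop_atTop).eventually_gt_atTop 0) hw1
  have hP := tendsto_mul_rpow_mul_exp_div_log (a := 2 * α / (2 + p)) hC.ne' hT.ne' hwpos hu
    (by simpa only [neg_div, neg_mul] using hw2)
  rw [show 2 * (2 * α / (2 + p)) + 2 * p / (2 + p) = (4 * α + 2 * p) / (2 + p) by ring] at hP
  have hlim := tendsto_mul_sum_mul_exp_nhds_zero hσ.1 hs₁ hs₀ (by linarith [hβ.2]) lam hlam hmax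
    (fun n => (mul_pos hT (rpow_pos_of_pos (hwpos n) _)).le)
    (fun n => mul_nonneg (Nat.cast_nonneg n) (rpow_pos_of_pos (hwpos n) _).le) hu hP
  simpa only [mul_assoc] using hlim
end
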